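/- For a linear operator L on a 2-dimensional vector space with det(L) = 0, the exponential-type series Σ_{k≥0} L^k/(k+1)! equals Id + f(tr L)·L, where f(x) = (e^x - x - 1)/x² (extended analytically by f(0) = 1/2). -/

import Mathlib

/-!
By Cayley–Hamilton, `L² = (tr L) L` when `det L = 0`, so `L^(k+1) = (tr L)^k L` and the series
collapses to `1 + (∑ₖ tᵏ/(k+2)!) L` with `t = tr L`; the scalar series is the tail
`exp t - t - 1` of the exponential series divided by `t²`, and `1/2` when `t = 0`.
-/

open Nat

theorem Matrix.mul_self_eq_trace_smul_sub_det_smul {R : Type*} [CommRing R]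
    (M : Matrix (Fin 2) (Fin 2) R) : M * M = M.trace • M - M.det • 1 := by
  ext i j
  fin_cases i <;> fin_cases j <;>
    simp [Matrix.mul_apply, Matrix.trace_fin_two, Matrix.det_fin_two] <;> ring

theorem LinearMap.mul_self_eq_trace_smul_sub_det_smul {R M : Type*} [CommRing R]
    [StrongRankCondition R] [AddCommGroup M] [Module R M] [Module.Free R M] [Module.Finite R M]
    (hdim : Module.finrank R M = 2) (f : M →ₗ[R] M) :
    f * f = LinearMap.trace R M f • f - LinearMap.det f • 1 := by
  let b := Module.finBasisOfFinrankEq R M hdim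
  apply (LinearMap.toMatrix b b).injective
  rw [LinearMap.toMatrix_mul, Matrix.mul_self_eq_trace_smul_sub_det_smul, map_sub, map_smul,
    map_smul, LinearMap.toMatrix_one, trace_eq_matrix_trace R b, det_toMatrix b]

theorem pow_succ_eq_pow_smul_of_mul_self_eq_smul {R A : Type*} [Monoid R] [Monoid A]
    [MulAction R A] [IsScalarTower R A A] {a : A} {t : R} (h : a * a = t • a) (k : ℕ) :
    a ^ (k + 1) = t ^ k • a := by
  induction k with
  | zero => simp
  | succ k ih => rw [pow_succ, ih, smul_mul_assoc, h, smul_smul, ← pow_succ]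

theorem hasSum_inv_factorial_succ_smul_pow_of_mul_self_eq_smul {𝕜 A : Type*} [Field 𝕜]
    [TopologicalSpace 𝕜] [Ring A] [Algebra 𝕜 A] [TopologicalSpace A] [IsTopologicalAddGroup A]
    [ContinuousSMul 𝕜 A] {a : A} {t c : 𝕜} (h : a * a = t • a)
    (hc : HasSum (fun k : ℕ ↦ t ^ k / (k + 2)!) c) :
    HasSum (fun k : ℕ ↦ ((k + 1)! : 𝕜)⁻¹ • a ^ k) (1 + c • a) := by
  have hterm (k : ℕ) : ((k + 1 + 1)! : 𝕜)⁻¹ • a ^ (k + 1) = (t ^ k / (k + 2)!) • a := by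
    rw [pow_succ_eq_pow_smul_of_mul_self_eq_smul h, smul_smul, div_eq_inv_mul]
  rw [← hasSum_nat_add_iff' 1]
  simpa [hterm] using hc.smul_const a

namespace Real

theorem hasSum_pow_add_two_div_factorial (t : ℝ) :
    HasSum (fun k : ℕ ↦ t ^ (k + 2) / (k + 2)!) (exp t - t - 1) := by
  have h := (hasSum_nat_add_iff' 2).mpr (exp_eq_exp_ℝ ▸ NormedSpace.expSeries_div_hasSum_exp t)
  have hhead : ∑ i ∈ Finset.range 2, t ^ i / i ! = 1 + t := by simp [Finset.sum_range_succ]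
  rwa [hhead, ← sub_sub, sub_right_comm] at h

theorem hasSum_pow_div_factorial_add_two (t : ℝ) :
    HasSum (fun k : ℕ ↦ t ^ k / (k + 2)!)
      (if t = 0 then 1 / 2 else (exp t - t - 1) / t ^ 2) := by
  split_ifs with ht
  · subst ht
    convert hasSum_ite_eq 0 (1 / 2 : ℝ) using 1
    funext k
    cases k <;> simp [factorial]
  · refine ((hasSum_pow_add_two_div_factorial t).div_const (t ^ 2)).congr_fun fun k ↦ ?_
    field_simp
    ring

end Real

theorem dexp_series_of_det_zero {V : Type*} [NormedAddCommGroup V] [NormedSpace ℝ V]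
    [FiniteDimensional ℝ V] (hdim : Module.finrank ℝ V = 2)
    (L : V →L[ℝ] V) (hdet : LinearMap.det (L : V →ₗ[ℝ] V) = 0) :
    ∑' k : ℕ, (((k + 1).factorial : ℝ)⁻¹) • L ^ k =
      ContinuousLinearMap.id ℝ V +
        (if LinearMap.trace ℝ V (L : V →ₗ[ℝ] V) = 0 then (1 / 2 : ℝ)
          else (Real.exp (LinearMap.trace ℝ V (L : V →ₗ[ℝ] V))
              - LinearMap.trace ℝ V (L : V →ₗ[ℝ] V) - 1)
            / (LinearMap.trace ℝ V (L : V →ₗ[ℝ] V)) ^ 2) • L := by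
  have hL : L * L = LinearMap.trace ℝ V (L : V →ₗ[ℝ] V) • L := by
    apply ContinuousLinearMap.coe_injective
    simpa [hdet] using LinearMap.mul_self_eq_trace_smul_sub_det_smul hdim (L : V →ₗ[ℝ] V)
  exact (hasSum_inv_factorial_succ_smul_pow_of_mul_self_eq_smul hL
    (Real.hasSum_pow_div_factorial_add_two _)).tsum_eq
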